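/- Let Π = P + C ⊆ ℝ^d be a rational convex polyhedron expressed as the Minkowski sum of a rational polytope P (the convex hull of finitely many rational points) and a rational polyhedral cone C (the cone generated by finitely many rational vectors), let Π° denote the relative interior of Π, and let A = C ∩ ℤ^d. Then Π° ∩ ℤ^d is a finitely generated module over the monoid A; that is, there exists a finite set F ⊆ ℤ^d such that Π° ∩ ℤ^d = F + A. -/

import Mathlib

/-!
Scaling the rational generators of `C` gives integer generators `wᵢ`, and every point
`∑ cᵢ wᵢ` of `C` is `∑ ⌊cᵢ⌋ wᵢ` plus a point of the parallelepiped spanned by the `wᵢ`. Hence the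
lattice points of `P + C` lie in `F₀ + A`, where `F₀` is the finite set of lattice points of the
bounded set `P + parallelepiped`, and `A` is generated by the `wᵢ` together with the lattice points
of the parallelepiped. Translation by a point of `C` maps `Π` into itself, hence preserves `Π°`, so
for each `f ∈ F₀` the set `{a ∈ A | f + a ∈ Π°}` is an ideal of the finitely generated monoid `A`.
Such ideals are finitely generated because the monoid algebra `ℤ[A]` is Noetherian.
-/

open Pointwise Set Bornology

theorem AddMonoid.FG.exists_finset_eq_add_univ {M : Type*} [AddCommMonoid M] [AddMonoid.FG M]
    {T : Set M} (hT : ∀ t ∈ T, ∀ a, t + a ∈ T) : ∃ G : Finset M, T = (G : Set M) + univ := by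
  classical
  have : IsNoetherianRing (AddMonoidAlgebra ℤ M) := Algebra.FiniteType.isNoetherianRing ℤ _
  obtain ⟨X, hXT, hX⟩ := (Submodule.fg_span_iff_fg_span_finset_subset
    (AddMonoidAlgebra.of' ℤ M '' T)).mp (IsNoetherian.noetherian (Ideal.span _))
  obtain ⟨G, hGT, rfl⟩ := Finset.subset_set_image_iff.mp hXT
  refine ⟨G, subset_antisymm (fun t ht => ?_) ?_⟩
  · have ht' : AddMonoidAlgebra.of' ℤ M t ∈ Ideal.span (AddMonoidAlgebra.of' ℤ M '' G) := by
      rw [← Finset.coe_image]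
      exact (hX.le (Ideal.subset_span ⟨t, ht, rfl⟩) :)
    obtain ⟨g, hg, a, rfl⟩ := AddMonoidAlgebra.mem_ideal_span_of'_image.mp ht' t (by simp)
    exact ⟨g, hg, a, trivial, add_comm _ _⟩
  · rintro _ ⟨g, hg, a, -, rfl⟩
    exact hT g (hGT hg) a

theorem AddSubmonoid.exists_finset_eq_add_of_add_subset {G : Type*} [AddCommMonoid G]
    (A : AddSubmonoid G) [AddMonoid.FG A] {S : Set G} {F₀ : Finset G}
    (hSA : S + A ⊆ S) (hS : S ⊆ F₀ + A) : ∃ F : Finset G, S = F + A := by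
  classical
  have hT (f : G) : ∀ a ∈ {a : A | f + a ∈ S}, ∀ b, a + b ∈ {a : A | f + a ∈ S} :=
    fun a ha b => by simpa [add_assoc] using hSA (add_mem_add ha b.2)
  choose Gf hGf using fun f => AddMonoid.FG.exists_finset_eq_add_univ (hT f)
  refine ⟨F₀.biUnion fun f => (Gf f).image fun g : A => f + g, subset_antisymm (fun x hx => ?_) ?_⟩
  · obtain ⟨f, hf, a, ha, rfl⟩ := hS hx
    have haT : (⟨a, ha⟩ : A) ∈ {a : A | f + a ∈ S} := hx
    rw [hGf f] at haT
    obtain ⟨g, hg, b, -, hgb : g + b = ⟨a, ha⟩⟩ := haT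
    refine ⟨f + g, Finset.mem_biUnion.2 ⟨f, hf, Finset.mem_image_of_mem _ hg⟩, b, b.2, ?_⟩
    change f + g + b = f + a
    rw [add_assoc, ← AddSubmonoid.coe_add, hgb]
  · rintro _ ⟨_, hx, b, hb, rfl⟩
    obtain ⟨f, -, hx⟩ := Finset.mem_biUnion.1 hx
    obtain ⟨g, hg, rfl⟩ := Finset.mem_image.1 hx
    have hgT : g ∈ {a : A | f + a ∈ S} := by rw [hGf f]; exact ⟨g, hg, 0, trivial, add_zero g⟩
    exact hSA (add_mem_add hgT hb)

theorem Set.MapsTo.intrinsicInterior_add_right {𝕜 E : Type*} [Ring 𝕜] [AddCommGroup E]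
    [Module 𝕜 E] [TopologicalSpace E] [IsTopologicalAddGroup E] {s : Set E} {a : E}
    (h : MapsTo (· + a) s s) : MapsTo (· + a) (intrinsicInterior 𝕜 s) (intrinsicInterior 𝕜 s) := by
  intro x hx
  have hxs := intrinsicInterior_subset hx
  have ha : a ∈ (affineSpan 𝕜 s).direction := by
    simpa using AffineSubspace.vsub_mem_direction (subset_affineSpan 𝕜 s (h hxs))
      (subset_affineSpan 𝕜 s hxs)
  let φ : affineSpan 𝕜 s ≃ₜ affineSpan 𝕜 s := (Homeomorph.addRight a).subtype fun y => by
    simpa [vadd_eq_add, add_comm] using (AffineSubspace.vadd_mem_iff_mem_of_mem_direction ha).symm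
  obtain ⟨y, hy, rfl⟩ := mem_intrinsicInterior.mp hx
  refine mem_intrinsicInterior.mpr ⟨φ y, ?_, rfl⟩
  have hφ : φ '' ((↑) ⁻¹' s) ⊆ (↑) ⁻¹' s := by
    rintro _ ⟨z, hz, rfl⟩
    exact h hz
  exact interior_mono hφ (φ.image_interior _ ▸ mem_image_of_mem φ hy)

noncomputable abbrev Pi.intCastAddHom (κ : Type*) : (κ → ℤ) →+ (κ → ℝ) :=
  (Int.castAddHom ℝ).compLeft κ

theorem Pi.isometry_intCastAddHom (κ : Type*) [Fintype κ] : Isometry (Pi.intCastAddHom κ) :=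
  Real.isometry_intCast.postcomp_pi

theorem Bornology.IsBounded.finite_preimage_intCastAddHom {κ : Type*} [Fintype κ]
    {s : Set (κ → ℝ)} (hs : IsBounded s) : (Pi.intCastAddHom κ ⁻¹' s).Finite :=
  (Metric.isCompact_of_isClosed_isBounded (isClosed_discrete _)
    ((Pi.isometry_intCastAddHom κ).antilipschitz.isBounded_preimage hs)).finite_of_discrete

theorem isBounded_parallelepiped {ι E : Type*} [Fintype ι] [SeminormedAddCommGroup E]
    [NormedSpace ℝ E] (v : ι → E) : IsBounded (parallelepiped v) :=
  (isCompact_Icc.image (by fun_prop)).isBounded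

theorem Rat.exists_pos_nat_mul_eq_intCast {ι : Type*} [Fintype ι] (q : ι → ℚ) :
    ∃ n : ℕ, 0 < n ∧ ∃ z : ι → ℤ, ∀ i, (z i : ℚ) = n * q i := by
  have h (i : ι) : ∃ z : ℤ, (z : ℚ) = (∏ j, (q j).den : ℕ) * q i := by
    obtain ⟨c, hc⟩ := Finset.dvd_prod_of_mem (fun j => (q j).den) (Finset.mem_univ i)
    exact ⟨c * (q i).num, by rw [hc]; push_cast; rw [← Rat.den_mul_eq_num]; ring⟩
  choose z hz using h
  exact ⟨_, Finset.prod_pos fun i _ => (q i).den_pos, z, hz⟩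

namespace PointedCone

variable {ι E : Type*}

theorem mem_hull_range_iff {R : Type*} [Semiring R] [PartialOrder R] [IsOrderedRing R]
    [AddCommMonoid E] [Module R E] [Fintype ι] {u : ι → E} {x : E} :
    x ∈ hull R (range u) ↔ ∃ c : ι → R, (∀ i, 0 ≤ c i) ∧ x = ∑ i, c i • u i := by
  rw [Submodule.mem_span_range_iff_exists_fun]
  constructor
  · rintro ⟨c, rfl⟩
    exact ⟨fun i => c i, fun i => (c i).2, rfl⟩
  · rintro ⟨c, hc, rfl⟩
    exact ⟨fun i => ⟨c i, hc i⟩, rfl⟩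

theorem hull_range_smul [Fintype ι] {𝕜 : Type*} [Field 𝕜] [LinearOrder 𝕜] [IsStrictOrderedRing 𝕜]
    [AddCommGroup E] [Module 𝕜 E] {r : 𝕜} (hr : 0 < r) (u : ι → E) :
    hull 𝕜 (range fun i => r • u i) = hull 𝕜 (range u) := by
  have hr' : IsUnit (⟨r, hr.le⟩ : {c : 𝕜 // 0 ≤ c}) := isUnit_iff_ne_zero.mpr (ne_of_gt hr)
  refine Eq.trans ?_ (Submodule.span_smul_eq_of_isUnit (range u) _ hr')
  rw [smul_set_range]
  rfl

variable {κ : Type*}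

noncomputable def latticePoints (C : PointedCone ℝ (κ → ℝ)) : AddSubmonoid (κ → ℤ) :=
  C.toAddSubmonoid.comap (Pi.intCastAddHom κ)

variable {u : ι → κ → ℤ}

theorem closure_range_le_latticePoints_hull :
    AddSubmonoid.closure (range u) ≤ (hull ℝ (range (Pi.intCastAddHom κ ∘ u))).latticePoints :=
  AddSubmonoid.closure_le.mpr <| range_subset_iff.mpr fun i => subset_hull (mem_range_self i)

theorem parallelepiped_subset_hull [Fintype ι] {v : ι → E} [AddCommGroup E] [Module ℝ E] :
    parallelepiped v ⊆ hull ℝ (range v) := fun x hx => by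
  obtain ⟨t, ht, rfl⟩ := (mem_parallelepiped_iff v x).mp hx
  exact mem_hull_range_iff.mpr ⟨t, ht.1, rfl⟩

theorem exists_mem_closure_sub_mem_parallelepiped [Fintype ι] {y : κ → ℝ}
    (hy : y ∈ hull ℝ (range (Pi.intCastAddHom κ ∘ u))) :
    ∃ a ∈ AddSubmonoid.closure (range u),
      y - Pi.intCastAddHom κ a ∈ parallelepiped (Pi.intCastAddHom κ ∘ u) := by
  obtain ⟨c, hc, rfl⟩ := mem_hull_range_iff.mp hy
  refine ⟨∑ i, ⌊c i⌋₊ • u i, sum_mem fun i _ => nsmul_mem (AddSubmonoid.subset_closure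
    (mem_range_self i)) _, (mem_parallelepiped_iff _ _).mpr ⟨fun i => c i - ⌊c i⌋₊,
    ⟨fun i => sub_nonneg.mpr (Nat.floor_le (hc i)), fun i => ?_⟩, ?_⟩⟩
  · linarith [Nat.lt_floor_add_one (c i), Pi.one_apply (M := fun _ : ι => ℝ) i]
  · simp only [map_sum, map_nsmul, sub_smul, Finset.sum_sub_distrib, Nat.cast_smul_eq_nsmul,
      Function.comp_apply]

variable [Fintype ι] [Fintype κ]

theorem fg_latticePoints_hull : (hull ℝ (range (Pi.intCastAddHom κ ∘ u))).latticePoints.FG := by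
  refine (AddSubmonoid.fg_iff _).mpr
    ⟨Pi.intCastAddHom κ ⁻¹' parallelepiped (Pi.intCastAddHom κ ∘ u) ∪ range u,
      le_antisymm ?_ fun a ha => ?_,
      (isBounded_parallelepiped _).finite_preimage_intCastAddHom.union (finite_range u)⟩
  · refine AddSubmonoid.closure_le.mpr (union_subset (fun x hx => ?_) ?_)
    · exact parallelepiped_subset_hull hx
    · exact (AddSubmonoid.closure_le.mp closure_range_le_latticePoints_hull)
  · obtain ⟨b, hb, hab⟩ := exists_mem_closure_sub_mem_parallelepiped ha
    rw [← sub_add_cancel a b]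
    refine add_mem (AddSubmonoid.subset_closure (Or.inl ?_))
      (AddSubmonoid.closure_mono subset_union_right hb)
    simpa using hab

theorem exists_finset_preimage_add_hull_subset {B : Set (κ → ℝ)} (hB : IsBounded B) :
    ∃ F₀ : Finset (κ → ℤ), Pi.intCastAddHom κ ⁻¹' (B + hull ℝ (range (Pi.intCastAddHom κ ∘ u)))
      ⊆ F₀ + (hull ℝ (range (Pi.intCastAddHom κ ∘ u))).latticePoints := by
  have hBbox := hB.add (isBounded_parallelepiped (Pi.intCastAddHom κ ∘ u))
  refine ⟨hBbox.finite_preimage_intCastAddHom.toFinset, fun x hx => ?_⟩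
  obtain ⟨b, hb, y, hy, hxy⟩ := hx
  obtain ⟨a, ha, hya⟩ := exists_mem_closure_sub_mem_parallelepiped hy
  refine ⟨x - a, ?_, a, closure_range_le_latticePoints_hull ha, sub_add_cancel x a⟩
  simp only [Finite.coe_toFinset, mem_preimage, map_sub, ← hxy]
  exact ⟨b, hb, _, hya, add_sub_assoc' b y _⟩

end PointedCone

/-- If `Π = P + C ⊆ ℝ^d` is a rational convex polyhedron, expressed as the Minkowski
sum of a rational polytope `P` (convex hull of finitely many rational points) and a
rational polyhedral cone `C` (cone generated by finitely many rational vectors), and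
`Π°` is the relative (intrinsic) interior of `Π`, then `Π° ∩ ℤ^d` is a finitely
generated module over the monoid `A = C ∩ ℤ^d`: there is a finite set `F ⊆ ℤ^d`
with `Π° ∩ ℤ^d = F + A`. -/
theorem polyhedron_relint_lattice_points_fg_module {d m k : ℕ}
    (p : Fin m → (Fin d → ℚ)) (v : Fin k → (Fin d → ℚ))
    (P C Pl : Set (Fin d → ℝ))
    (hP : P = convexHull ℝ (Set.range fun i => fun j => ((p i j : ℝ))))
    (hC : C = {x | ∃ c : Fin k → ℝ, (∀ i, 0 ≤ c i) ∧
      x = ∑ i, c i • fun j => ((v i j : ℝ))})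
    (hPl : Pl = P + C) :
    ∃ F : Finset (Fin d → ℤ),
      {x : Fin d → ℤ | (fun j => (x j : ℝ)) ∈ intrinsicInterior ℝ Pl} =
        (F : Set (Fin d → ℤ)) + {x : Fin d → ℤ | (fun j => (x j : ℝ)) ∈ C} := by
  obtain ⟨n, hn, z, hz⟩ := Rat.exists_pos_nat_mul_eq_intCast (Function.uncurry v)
  let w : Fin k → Fin d → ℤ := fun i j => z (i, j)
  have hCw : C = PointedCone.hull ℝ (range (Pi.intCastAddHom (Fin d) ∘ w)) := by
    have hw : Pi.intCastAddHom (Fin d) ∘ w = fun i => (n : ℝ) • fun j => (v i j : ℝ) := by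
      ext i j
      simpa using congrArg (Rat.cast : ℚ → ℝ) (hz (i, j))
    rw [hw, PointedCone.hull_range_smul (Nat.cast_pos.mpr hn), hC]
    ext x
    exact PointedCone.mem_hull_range_iff.symm
  subst hCw hPl
  set K := PointedCone.hull ℝ (range (Pi.intCastAddHom (Fin d) ∘ w))
  have hA : AddMonoid.FG K.latticePoints :=
    (AddMonoid.fg_iff_addSubmonoid_fg _).mpr PointedCone.fg_latticePoints_hull
  have hP_bdd : IsBounded P := hP ▸ isBounded_convexHull.mpr (finite_range _).isBounded
  obtain ⟨F₀, hF₀⟩ := PointedCone.exists_finset_preimage_add_hull_subset (u := w) hP_bdd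
  have hK_add (a : Fin d → ℤ) (ha : a ∈ K.latticePoints) :
      MapsTo (· + Pi.intCastAddHom (Fin d) a) (P + K) (P + K) := by
    rintro _ ⟨y, hy, c, hc, rfl⟩
    exact ⟨y, hy, c + _, add_mem hc ha, (add_assoc y c _).symm⟩
  refine K.latticePoints.exists_finset_eq_add_of_add_subset ?_
    ((preimage_mono intrinsicInterior_subset).trans hF₀)
  rintro _ ⟨x, hx, a, ha, rfl⟩
  change Pi.intCastAddHom (Fin d) (x + a) ∈ intrinsicInterior ℝ _
  rw [map_add]
  exact (hK_add a ha).intrinsicInterior_add_right hx
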